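/- arXiv:1808.09486 — 2 statements merged into one kernel-verified Lean document; each statement's English description precedes it below -/
import Mathlib

section
/- Let u, v, w be words over a finite alphabet A such that v respects the transition to w, and let S = {s_1 < … < s_m} ⊆ O_v(u). Then every occurrence of v in u not explicitly replaced persists: if p ∈ O_v(u) ∖ S and s_i < p < s_{i+1} (for some 0 ≤ i ≤ m, with the conventions s_0 = −∞ and s_{m+1} = +∞), then p + i(|w|−|v|) ∈ O_v(R_u^{v→w}(S)). -/
/-- `v` occurs in `u` at position `i`, i.e. `u_{[i, i+|v|)} = v`. -/
def occursAt {A : Type*} (v u : List A) (i : ℕ) : Prop :=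
  (u.drop i).take v.length = v

/-- `O_v(u)`: the set of positions at which `v` occurs in `u`. -/
def occSet {A : Type*} (v u : List A) : Set ℕ := {i | occursAt v u i}

/-- `O_v(u)` viewed as a subset of `ℤ`. -/
def occSetZ {A : Type*} (v u : List A) : Set ℤ :=
  {i | ∃ k : ℕ, (k : ℤ) = i ∧ occursAt v u k}

/-- `R_u^{v→w}(i)`: replace the occurrence of `v` at position `i` in `u` by `w`. -/
def replaceAt {A : Type*} (v w u : List A) (i : ℕ) : List A :=
  u.take i ++ w ++ u.drop (i + v.length)

/-- Sequential replacement of `v` by `w` at a list of positions (given in the coordinates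
of the original word; after each replacement the remaining positions shift by `|w| - |v|`):
`u¹ = u`, `u^{r+1} = R_{uʳ}^{v→w}(s_r + (r-1)(|w|-|v|))`. -/
def seqReplace {A : Type*} (v w : List A) : List A → List ℤ → List A
  | u, [] => u
  | u, s :: rest =>
      seqReplace v w (replaceAt v w u s.toNat)
        (rest.map (· + ((w.length : ℤ) - (v.length : ℤ))))
  termination_by _ l => l.length
  decreasing_by simp [List.length_map]

/-- `R_u^{v→w}(S)`: replace `v` by `w` at all positions of `S`, from left to right. -/
def replaceSet {A : Type*} (v w u : List A) (S : Finset ℕ) : List A :=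
  seqReplace v w u ((S.sort (· ≤ ·)).map (fun k : ℕ => (k : ℤ)))

/-- `v` respects the transition to `w` (conditions (i)-(iv)). -/
def Respects {A : Type*} (v w : List A) : Prop :=
  ∀ u : List A, ∀ i ∈ occSet v u,
    (∀ j ∈ occSet v u, i < j →
      ((j : ℤ) + (w.length : ℤ) - (v.length : ℤ)) ∈ occSetZ v (replaceAt v w u i)) ∧
    (∀ j ∈ occSet v u, j < i → j ∈ occSet v (replaceAt v w u i)) ∧
    (∀ j ∈ occSet w u, j < i → j ∈ occSet w (replaceAt v w u i)) ∧
    (∀ j ∈ occSet v u, i < j → (i : ℤ) < (j : ℤ) + (w.length : ℤ) - (v.length : ℤ))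

/-!
Replacing the occurrences of `v` from left to right, a surviving occurrence `p` stays put while
the replacements happen to its right (condition (ii)) and is shifted by `|w| - |v|` by each
replacement to its left (condition (i)); condition (iv) keeps the remaining replacement positions
to the right of the one just made, so the induction on the list of positions goes through.
-/

section

variable {A : Type*} {v w u : List A}

theorem natCast_mem_occSetZ_iff {k : ℕ} : (k : ℤ) ∈ occSetZ v u ↔ k ∈ occSet v u :=
  ⟨fun ⟨_, hk, hocc⟩ => Nat.cast_injective hk ▸ hocc, fun hocc => ⟨k, rfl, hocc⟩⟩

theorem seqReplace_cons (s : ℤ) (rest : List ℤ) :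
    seqReplace v w u (s :: rest) =
      seqReplace v w (replaceAt v w u s.toNat) (rest.map (· + ((w.length : ℤ) - v.length))) := by
  rw [seqReplace]

namespace Respects

theorem shifted_mem_replaceAt (h : Respects v w) {i j : ℤ} (hi : i ∈ occSetZ v u)
    (hj : j ∈ occSetZ v u)
    (hij : i < j) :
    j + ((w.length : ℤ) - v.length) ∈ occSetZ v (replaceAt v w u i.toNat) ∧
      i < j + ((w.length : ℤ) - v.length) := by
  obtain ⟨i, rfl, hi⟩ := hi
  obtain ⟨j, rfl, hj⟩ := hj
  obtain ⟨hshift, -, -, hright⟩ := h u i hi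
  simp only [Int.toNat_natCast, ← add_sub_assoc]
  exact ⟨hshift j hj (by omega), hright j hj (by omega)⟩

theorem mem_replaceAt_of_lt (h : Respects v w) {i j : ℤ} (hi : i ∈ occSetZ v u)
    (hj : j ∈ occSetZ v u) (hji : j < i) : j ∈ occSetZ v (replaceAt v w u i.toNat) := by
  obtain ⟨i, rfl, hi⟩ := hi
  obtain ⟨j, rfl, hj⟩ := hj
  rw [Int.toNat_natCast, natCast_mem_occSetZ_iff]
  exact (h u i hi).2.1 j hj (by omega)

theorem shifted_tail (h : Respects v w) {s : ℤ} {rest : List ℤ}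
    (hL : (s :: rest).Pairwise (· < ·)) (hLu : ∀ t ∈ s :: rest, t ∈ occSetZ v u) :
    (rest.map (· + ((w.length : ℤ) - v.length))).Pairwise (· < ·) ∧
      ∀ t ∈ rest.map (· + ((w.length : ℤ) - v.length)),
        t ∈ occSetZ v (replaceAt v w u s.toNat) ∧ s < t := by
  obtain ⟨hs_lt, hrest⟩ := List.pairwise_cons.mp hL
  refine ⟨hrest.map _ fun a b hab => add_lt_add_left hab _, ?_⟩
  simp only [List.mem_map]
  rintro _ ⟨t, ht, rfl⟩
  exact h.shifted_mem_replaceAt (hLu s List.mem_cons_self) (hLu t (List.mem_cons_of_mem _ ht))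
    (hs_lt t ht)

theorem mem_occSetZ_seqReplace (h : Respects v w) :
    ∀ (u : List A) (L : List ℤ), L.Pairwise (· < ·) → (∀ s ∈ L, s ∈ occSetZ v u) →
      ∀ {p : ℤ}, p ∈ occSetZ v u → p ∉ L →
      p + L.countP (· < p) * ((w.length : ℤ) - v.length) ∈ occSetZ v (seqReplace v w u L)
  | _, [], _, _, p, hp, _ => by simpa [seqReplace] using hp
  | u, s :: rest, hL, hLu, p, hp, hpL => by
    rw [seqReplace_cons]
    set d : ℤ := (w.length : ℤ) - v.length
    obtain ⟨hrest', hrestu⟩ := h.shifted_tail hL hLu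
    have hs := hLu s List.mem_cons_self
    have hs_lt := (List.pairwise_cons.mp hL).1
    rcases lt_or_gt_of_ne (fun hps : p = s => hpL (hps ▸ List.mem_cons_self)) with hps | hsp
    · have hpast : ∀ t ∈ rest.map (· + d), p < t := fun t ht => hps.trans (hrestu t ht).2
      have hcount : (s :: rest).countP (· < p) = 0 := List.countP_eq_zero.mpr fun t ht => by
        rcases List.mem_cons.mp ht with rfl | ht
        · simpa using hps.le
        · simpa using (hps.trans (hs_lt t ht)).le
      have hcount' : (rest.map (· + d)).countP (· < p) = 0 :=
        List.countP_eq_zero.mpr fun t ht => by simpa using (hpast t ht).le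
      have := h.mem_occSetZ_seqReplace _ _ hrest' (fun t ht => (hrestu t ht).1)
        (h.mem_replaceAt_of_lt hs hp hps) fun hmem => (hpast p hmem).false
      rw [hcount', Nat.cast_zero, zero_mul, add_zero] at this
      rwa [hcount, Nat.cast_zero, zero_mul, add_zero]
    · obtain ⟨hpu, -⟩ := h.shifted_mem_replaceAt hs hp hsp
      have hcount : (s :: rest).countP (· < p) = rest.countP (· < p) + 1 :=
        List.countP_cons_of_pos (by simpa using hsp)
      have hcount' : (rest.map (· + d)).countP (· < p + d) = rest.countP (· < p) := by
        simp only [List.countP_map, Function.comp_def, add_lt_add_iff_right]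
      have hpnot : p + d ∉ rest.map (· + d) := by
        simpa only [List.mem_map, add_left_inj, exists_eq_right] using
          fun hmem => hpL (List.mem_cons_of_mem _ hmem)
      have := h.mem_occSetZ_seqReplace _ _ hrest' (fun t ht => (hrestu t ht).1) hpu hpnot
      rw [hcount'] at this
      rw [hcount]
      convert this using 1
      push_cast
      ring
termination_by _ L => L.length

end Respects

theorem countP_sort_lt (S : Finset ℕ) (p : ℕ) :
    (S.sort (· ≤ ·)).countP (· < p) = (S.filter (· < p)).card := by
  rw [Finset.card_def, Finset.filter_val, ← Multiset.countP_eq_card_filter,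
    ← Finset.sort_eq S (· ≤ ·), Multiset.coe_countP]

end

theorem statement7_general {A : Type*} (v w u : List A)
    (hresp : Respects v w) (S : Finset ℕ) (hS : ↑S ⊆ occSet v u)
    (p : ℕ) (hp : p ∈ occSet v u) (hpS : p ∉ S) :
    ((p : ℤ) + ((S.filter (fun s => s < p)).card : ℤ) * ((w.length : ℤ) - (v.length : ℤ)))
      ∈ occSetZ v (replaceSet v w u S) := by
  have hsorted : ((S.sort (· ≤ ·)).map (fun k : ℕ => (k : ℤ))).Pairwise (· < ·) :=
    (Finset.sortedLT_sort S).pairwise.map _ fun _ _ => Nat.cast_lt.mpr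
  have hmem : ∀ s ∈ (S.sort (· ≤ ·)).map (fun k : ℕ => (k : ℤ)), s ∈ occSetZ v u := by
    simp only [List.mem_map, Finset.mem_sort]
    rintro _ ⟨k, hk, rfl⟩
    exact natCast_mem_occSetZ_iff.mpr (hS hk)
  have hpL : (p : ℤ) ∉ (S.sort (· ≤ ·)).map (fun k : ℕ => (k : ℤ)) := by
    simpa only [List.mem_map, Finset.mem_sort, Nat.cast_inj, exists_eq_right] using hpS
  have := hresp.mem_occSetZ_seqReplace _ _ hsorted hmem (natCast_mem_occSetZ_iff.mpr hp) hpL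
  simp only [List.countP_map, Function.comp_def, Nat.cast_lt, countP_sort_lt] at this
  exact this

/-- Lemma (vsurvive): if `v` respects the transition to `w`, `S ⊆ O_v(u)`, and
`p ∈ O_v(u) ∖ S` with exactly `i` elements of `S` below `p`, then
`p + i(|w|-|v|) ∈ O_v(R_u^{v→w}(S))`. -/
theorem statement7 {A : Type*} [Fintype A] (v w u : List A)
    (hresp : Respects v w) (S : Finset ℕ) (hS : ↑S ⊆ occSet v u)
    (p : ℕ) (hp : p ∈ occSet v u) (hpS : p ∉ S) :
    ((p : ℤ) + ((S.filter (fun s => s < p)).card : ℤ) * ((w.length : ℤ) - (v.length : ℤ)))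
      ∈ occSetZ v (replaceSet v w u S) :=
  statement7_general v w u hresp S hS p hp hpS
end

section
/- Let S ⊆ ℕ ∪ {0} with gcd(S+1) = 1 and let λ = e^{h_top(X_S)}. Then Σ_{n ∈ S} λ^{−n−1} = 1; that is, h_top(X_S) = log λ where λ is the unique solution of 1 = Σ_{n ∈ S} λ^{−n−1}. -/
open MeasureTheory Filter Real Topology

/-- The shift map on `A^ℤ`: `(σ x) i = x (i+1)`. -/
def shiftMap (A : Type*) : (ℤ → A) → (ℤ → A) := fun x i => x (i + 1)

/-- A subshift: a nonempty, closed, shift-invariant subset of `A^ℤ`. -/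
def IsSubshift {A : Type*} [TopologicalSpace A] (X : Set (ℤ → A)) : Prop :=
  X.Nonempty ∧ IsClosed X ∧ shiftMap A '' X = X

/-- Cylinder set of a word given as a list (placed on `[0, |u|)`). -/
def cylinderL {A : Type*} (X : Set (ℤ → A)) (u : List A) : Set (ℤ → A) :=
  {x ∈ X | ∀ i : Fin u.length, x ((i : ℕ) : ℤ) = u.get i}

/-- The language of `X`: all nonempty words appearing in points of `X`. -/
def langL {A : Type*} (X : Set (ℤ → A)) : Set (List A) :=
  {u | u ≠ [] ∧ (cylinderL X u).Nonempty}

/-- The set of words of length `n` appearing in points of `X`. -/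
def langF {A : Type*} (X : Set (ℤ → A)) (n : ℕ) : Set (Fin n → A) :=
  {w | ({x ∈ X | ∀ i : Fin n, x ((i : ℕ) : ℤ) = w i} : Set (ℤ → A)).Nonempty}

/-- The partial entropy sum `∑_{w ∈ A^n} -μ(w) log μ(w)`. -/
noncomputable def entropySumF {A : Type*} [Fintype A] [MeasurableSpace A]
    (X : Set (ℤ → A)) (μ : Measure (ℤ → A)) (n : ℕ) : ℝ :=
  ∑ w : Fin n → A,
    -((μ {x ∈ X | ∀ i : Fin n, x ((i : ℕ) : ℤ) = w i}).toReal *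
      Real.log (μ {x ∈ X | ∀ i : Fin n, x ((i : ℕ) : ℤ) = w i}).toReal)

/-- The extender set of a word `u`, as a set of pairs (left-infinite tail,
right-infinite tail); the left tail records `x (-1), x (-2), …` and the right tail
records `x |u|, x (|u|+1), …`. -/
def extenderL {A : Type*} (X : Set (ℤ → A)) (u : List A) : Set ((ℕ → A) × (ℕ → A)) :=
  {p | ∃ x ∈ cylinderL X u, (∀ i : ℕ, p.1 i = x (-(i : ℤ) - 1)) ∧
    (∀ i : ℕ, p.2 i = x ((u.length : ℤ) + (i : ℤ)))}

/-- The `S`-gap subshift on `{0,1}`: the number of `0`s between any two consecutive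
`1`s lies in `S`. -/
def Xgap (S : Set ℕ) : Set (ℤ → Fin 2) :=
  {x | ∀ i j : ℤ, i < j → x i = 1 → x j = 1 → (∀ k : ℤ, i < k → k < j → x k = 0) →
    (j - i - 1).toNat ∈ S}

/-!
Encode a word of `{0,1}^n` by the set of positions of its `1`s. Let `e k = #(gapSetsEndingAt S k)`
count the words of `X_S` whose last `1` sits at position `k`, and `a n = #(gapSets S n)` the words
of length `n`. Cutting off the last `1` gives the renewal equation
`e k = 1 + ∑_{s ∈ S, s < k} e (k - s - 1)`, and cutting off the trailing `0`s gives
`a n = 1 + ∑_{k < n} e k`.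

With `x = e^{-h}`: if a finite part of `∑_{s ∈ S} x^{s+1}` exceeded `1`, the renewal equation
would force `e k ≥ κ z^{-k}` for some `z < x`, so `h ≥ -log z > h`. If `h > 0` and the full sum
were `< 1`, it would stay `< 1` at some `y ∈ (x, 1)`, the renewal equation would bound
`y^k e k`, hence `y^n a n`, and `h ≤ -log y < h`. If `h = 0` the first bound leaves `S` at most
one element, and `S ≠ ∅` because `gcd(∅ + 1) = 0`.
-/

open Finset

section Entropy

variable {u : ℕ → ℝ} {h z : ℝ}

lemma exp_neg_le_of_le_pow_mul (hu : Tendsto (fun n => log (u n) / n) atTop (𝓝 h)) (hz : 0 < z)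
    {κ : ℝ} (hκ : 0 < κ) (hlow : ∀ᶠ n in atTop, κ ≤ z ^ n * u n) : exp (-h) ≤ z := by
  have hlim : Tendsto (fun n : ℕ => log κ / n - log z) atTop (𝓝 (0 - log z)) :=
    (tendsto_const_div_atTop_nhds_zero_nat _).sub_const _
  have hle : -log z ≤ h := by
    refine le_of_tendsto_of_tendsto (by simpa using hlim) hu ?_
    filter_upwards [hlow, eventually_gt_atTop 0] with n hn hn0
    have hn0' : (0 : ℝ) < n := Nat.cast_pos.2 hn0
    have hlog := log_le_log hκ hn
    rw [log_mul (by positivity) (by nlinarith [pow_pos hz n]), log_pow] at hlog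
    rw [sub_le_iff_le_add, div_add' _ _ _ hn0'.ne', div_le_div_iff_of_pos_right hn0']
    linarith
  simpa [exp_log hz] using exp_le_exp.2 (neg_le.1 hle)

lemma le_exp_neg_of_pow_mul_le (hu : Tendsto (fun n => log (u n) / n) atTop (𝓝 h)) (hz : 0 < z)
    (hpos : ∀ᶠ n in atTop, 0 < u n) {C : ℝ} (hup : ∀ᶠ n in atTop, z ^ n * u n ≤ C) :
    z ≤ exp (-h) := by
  obtain ⟨n₀, hn₀⟩ := (hpos.and hup).exists
  have hC : 0 < C := (mul_pos (pow_pos hz n₀) hn₀.1).trans_le hn₀.2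
  have hlim : Tendsto (fun n : ℕ => log C / n - log z) atTop (𝓝 (0 - log z)) :=
    (tendsto_const_div_atTop_nhds_zero_nat _).sub_const _
  have hle : h ≤ -log z := by
    refine le_of_tendsto_of_tendsto hu (by simpa using hlim) ?_
    filter_upwards [hpos, hup, eventually_gt_atTop 0] with n hn hnC hn0
    have hn0' : (0 : ℝ) < n := Nat.cast_pos.2 hn0
    have hlog := log_le_log (by positivity) hnC
    rw [log_mul (by positivity) hn.ne', log_pow] at hlog
    rw [le_sub_iff_add_le, div_add' _ _ _ hn0'.ne', div_le_div_iff_of_pos_right hn0']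
    linarith
  simpa [exp_log hz] using exp_le_exp.2 (le_neg.1 hle)

end Entropy

section Renewal

variable {e : ℕ → ℝ}

lemma pow_le_pow_succ_mul_of_sum_le {T : Finset ℕ} {z : ℝ} {M : ℕ} (hz0 : 0 ≤ z) (hz1 : z ≤ 1)
    (hT : 1 ≤ ∑ s ∈ T, z ^ (s + 1)) (hTM : ∀ s ∈ T, s < M) (he : ∀ k, 1 ≤ e k)
    (hrec : ∀ k, M ≤ k → ∑ s ∈ T, e (k - s - 1) ≤ e k) (k : ℕ) : z ^ M ≤ z ^ (k + 1) * e k := by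
  induction k using Nat.strong_induction_on with
  | _ k ih =>
  by_cases hk : k < M
  · calc z ^ M ≤ z ^ (k + 1) := pow_le_pow_of_le_one hz0 hz1 hk
      _ ≤ z ^ (k + 1) * e k := le_mul_of_one_le_right (by positivity) (he k)
  calc z ^ M ≤ ∑ s ∈ T, z ^ (s + 1) * z ^ M := by
        rw [← sum_mul]; exact le_mul_of_one_le_left (by positivity) hT
    _ ≤ ∑ s ∈ T, z ^ (s + 1) * (z ^ (k - s - 1 + 1) * e (k - s - 1)) :=
        sum_le_sum fun s hs =>
          mul_le_mul_of_nonneg_left (ih _ (by have := hTM s hs; omega)) (by positivity)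
    _ = z ^ (k + 1) * ∑ s ∈ T, e (k - s - 1) := by
        rw [mul_sum]
        refine sum_congr rfl fun s hs => ?_
        rw [← mul_assoc, ← pow_add, show s + 1 + (k - s - 1 + 1) = k + 1 by have := hTM s hs; omega]
    _ ≤ z ^ (k + 1) * e k := mul_le_mul_of_nonneg_left (hrec k (not_lt.1 hk)) (by positivity)

lemma pow_succ_mul_le_of_le_one_add_sum {D : ℕ → Finset ℕ} {y c : ℝ} (hy0 : 0 ≤ y) (hy1 : y ≤ 1)
    (hc : c < 1) (hD : ∀ k, ∀ s ∈ D k, s < k) (hDc : ∀ k, ∑ s ∈ D k, y ^ (s + 1) ≤ c)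
    (hrec : ∀ k, e k ≤ 1 + ∑ s ∈ D k, e (k - s - 1)) (k : ℕ) : y ^ (k + 1) * e k ≤ (1 - c)⁻¹ := by
  induction k using Nat.strong_induction_on with
  | _ k ih =>
  have hK : 0 ≤ (1 - c)⁻¹ := inv_nonneg.2 (by linarith)
  calc y ^ (k + 1) * e k ≤ y ^ (k + 1) * (1 + ∑ s ∈ D k, e (k - s - 1)) :=
        mul_le_mul_of_nonneg_left (hrec k) (by positivity)
    _ = y ^ (k + 1) + ∑ s ∈ D k, y ^ (s + 1) * (y ^ (k - s - 1 + 1) * e (k - s - 1)) := by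
        rw [mul_add, mul_one, mul_sum]
        congr 1
        refine sum_congr rfl fun s hs => ?_
        rw [← mul_assoc, ← pow_add,
          show s + 1 + (k - s - 1 + 1) = k + 1 by have := hD k s hs; omega]
    _ ≤ 1 + ∑ s ∈ D k, y ^ (s + 1) * (1 - c)⁻¹ :=
        add_le_add (pow_le_one₀ hy0 hy1) (sum_le_sum fun s hs =>
          mul_le_mul_of_nonneg_left (ih _ (by have := hD k s hs; omega)) (by positivity))
    _ ≤ 1 + c * (1 - c)⁻¹ := by
        rw [← sum_mul]; exact (add_le_add_iff_left 1).2 (mul_le_mul_of_nonneg_right (hDc k) hK)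
    _ = (1 - c)⁻¹ := by field_simp [show 1 - c ≠ 0 by linarith]; ring

lemma pow_mul_one_add_sum_le {y K : ℝ} (hy0 : 0 ≤ y) (hy1 : y < 1) (hK : 0 ≤ K)
    (he : ∀ k, y ^ (k + 1) * e k ≤ K) (n : ℕ) :
    y ^ n * (1 + ∑ k ∈ range n, e k) ≤ 1 + K / (1 - y) := by
  calc y ^ n * (1 + ∑ k ∈ range n, e k)
        = y ^ n + ∑ k ∈ range n, y ^ (n - 1 - k) * (y ^ (k + 1) * e k) := by
        rw [mul_add, mul_one, mul_sum]
        congr 1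
        refine sum_congr rfl fun k hk => ?_
        rw [← mul_assoc, ← pow_add, show n - 1 - k + (k + 1) = n by have := mem_range.1 hk; omega]
    _ ≤ 1 + ∑ k ∈ range n, y ^ (n - 1 - k) * K :=
        add_le_add (pow_le_one₀ hy0 hy1.le)
          (sum_le_sum fun k _ => mul_le_mul_of_nonneg_left (he k) (by positivity))
    _ = 1 + (∑ k ∈ range n, y ^ k) * K := by
        rw [← sum_mul, sum_range_reflect (fun k => y ^ k)]
    _ ≤ 1 + y ^ 0 / (1 - y) * K := by
        rw [range_eq_Ico]
        exact (add_le_add_iff_left 1).2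
          (mul_le_mul_of_nonneg_right (geom_sum_Ico_le_of_lt_one hy0 hy1) hK)
    _ = 1 + K / (1 - y) := by ring

end Renewal

lemma exists_lt_one_lt_sum_pow {T : Finset ℕ} {x : ℝ} (hx : 0 < x)
    (hT : 1 < ∑ s ∈ T, x ^ (s + 1)) : ∃ z, 0 < z ∧ z < x ∧ 1 < ∑ s ∈ T, z ^ (s + 1) := by
  have hnear : ∀ᶠ z in 𝓝[<] x, 1 < ∑ s ∈ T, z ^ (s + 1) :=
    nhdsWithin_le_nhds <| ((continuous_finsetSum T fun s _ => continuous_pow (s + 1)).tendsto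
      x).eventually (lt_mem_nhds hT)
  obtain ⟨z, hz, hzx⟩ := (hnear.and (Ioo_mem_nhdsLT hx)).exists
  exact ⟨z, hzx.1, hzx.2, hz⟩

lemma exists_lt_tsum_pow_lt {S : Set ℕ} {x c : ℝ} (hx0 : 0 ≤ x) (hx1 : x < 1)
    (hc : ∑' s : S, x ^ ((s : ℕ) + 1) < c) :
    ∃ y, x < y ∧ y < 1 ∧ ∑' s : S, y ^ ((s : ℕ) + 1) < c := by
  obtain ⟨r, hxr, hr1⟩ := exists_between hx1
  have hsum : Summable fun n : ℕ => r ^ (n + 1) :=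
    (summable_nat_add_iff 1).2 (summable_geometric_of_lt_one (by linarith) hr1)
  have hcont : ContinuousOn (fun y : ℝ => ∑' s : S, y ^ ((s : ℕ) + 1)) (Set.Icc (-r) r) :=
    continuousOn_tsum (fun s => (continuous_pow _).continuousOn) (hsum.subtype S)
      fun s y hy => by
        rw [norm_pow]; exact pow_le_pow_left₀ (norm_nonneg y) (abs_le.2 hy) _
  have hnear : ∀ᶠ y in 𝓝[>] x, ∑' s : S, y ^ ((s : ℕ) + 1) < c :=
    nhdsWithin_le_nhds <| (hcont.continuousAt (Icc_mem_nhds (by linarith) (by linarith))).eventually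
      (gt_mem_nhds hc)
  obtain ⟨y, hyc, hy⟩ := (hnear.and (Ioo_mem_nhdsGT hx1)).exists
  exact ⟨y, hy.1, hy.2, hyc⟩

namespace GapShift

variable {S : Set ℕ}

def IsGapSet (S : Set ℕ) (P : Finset ℕ) : Prop :=
  ∀ p ∈ P, ∀ q ∈ P, p < q → (∀ r ∈ P, r ≤ p ∨ q ≤ r) → q - p - 1 ∈ S

open Classical in
noncomputable def gapSets (S : Set ℕ) (n : ℕ) : Finset (Finset ℕ) :=
  (range n).powerset.filter (IsGapSet S)

open Classical in
noncomputable def gapSetsEndingAt (S : Set ℕ) (k : ℕ) : Finset (Finset ℕ) :=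
  (gapSets S (k + 1)).filter (k ∈ ·)

lemma mem_gapSets {n : ℕ} {P : Finset ℕ} : P ∈ gapSets S n ↔ P ⊆ range n ∧ IsGapSet S P := by
  simp [gapSets]

lemma mem_gapSetsEndingAt {k : ℕ} {P : Finset ℕ} :
    P ∈ gapSetsEndingAt S k ↔ P ⊆ range (k + 1) ∧ IsGapSet S P ∧ k ∈ P := by
  simp [gapSetsEndingAt, mem_gapSets, and_assoc]

lemma isGapSet_empty : IsGapSet S ∅ := by
  simp [IsGapSet]

lemma isGapSet_singleton (k : ℕ) : IsGapSet S {k} := by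
  simp only [IsGapSet, mem_singleton]
  omega

lemma isGapSet_insert {Q : Finset ℕ} {j k : ℕ} (hQ : ∀ q ∈ Q, q ≤ j) (hj : j ∈ Q) (hjk : j < k) :
    IsGapSet S (insert k Q) ↔ IsGapSet S Q ∧ k - j - 1 ∈ S := by
  constructor
  · intro hP
    refine ⟨fun p hp q hq hpq hcons => hP p (mem_insert_of_mem hp) q (mem_insert_of_mem hq) hpq ?_,
      hP j (mem_insert_of_mem hj) k (mem_insert_self k Q) hjk ?_⟩
    · simp only [forall_mem_insert]
      exact ⟨Or.inr ((hQ q hq).trans hjk.le), hcons⟩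
    · simp only [forall_mem_insert]
      exact ⟨Or.inr le_rfl, fun r hr => Or.inl (hQ r hr)⟩
  · rintro ⟨hQgap, hgap⟩ p hp q hq hpq hcons
    have hp' : p ∈ Q := by
      rcases mem_insert.1 hp with rfl | hp
      · rcases mem_insert.1 hq with rfl | hq
        · omega
        · have := hQ q hq; omega
      · exact hp
    rcases mem_insert.1 hq with rfl | hq
    · have : p = j := by have := hQ p hp'; have := hcons j (mem_insert_of_mem hj); omega
      exact this ▸ hgap
    · exact hQgap p hp' q hq hpq fun r hr => hcons r (mem_insert_of_mem hr)

lemma eq_of_mem_gapSetsEndingAt {P : Finset ℕ} {j k : ℕ} (hj : P ∈ gapSetsEndingAt S j)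
    (hk : P ∈ gapSetsEndingAt S k) : j = k := by
  rw [mem_gapSetsEndingAt] at hj hk
  have h1 := mem_range.1 (hj.1 hk.2.2)
  have h2 := mem_range.1 (hk.1 hj.2.2)
  omega

lemma gapSetsEndingAt_eq (S : Set ℕ) (k : ℕ) [DecidablePred (· ∈ S)] :
    gapSetsEndingAt S k = insert {k}
      (((range k).filter (· ∈ S)).biUnion fun s =>
        (gapSetsEndingAt S (k - s - 1)).image (insert k)) := by
  ext P
  simp only [mem_insert, mem_biUnion, mem_filter, mem_range, mem_image, mem_gapSetsEndingAt]
  constructor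
  · rintro ⟨hPk, hP, hk⟩
    by_cases hsingle : P = {k}
    · exact Or.inl hsingle
    have hne : (P.erase k).Nonempty := by
      by_contra hemp
      rw [not_nonempty_iff_eq_empty, erase_eq_empty_iff] at hemp
      rcases hemp with rfl | rfl
      · simp at hk
      · exact hsingle rfl
    set j := (P.erase k).max' hne
    have hjmem := (P.erase k).max'_mem hne
    have hQj : ∀ q ∈ P.erase k, q ≤ j := fun q hq => (P.erase k).le_max' q hq
    have hjk : j < k := by
      have := mem_range.1 (hPk (mem_of_mem_erase hjmem)); have := ne_of_mem_erase hjmem; omega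
    rw [← insert_erase hk, isGapSet_insert hQj hjmem hjk] at hP
    refine Or.inr ⟨k - j - 1, ⟨by omega, hP.2⟩, P.erase k, ⟨fun q hq => ?_, hP.1, ?_⟩,
      insert_erase hk⟩
    · exact mem_range.2 (Nat.lt_succ_of_le ((hQj q hq).trans (by omega)))
    · rwa [show k - (k - j - 1) - 1 = j by omega]
  · rintro (rfl | ⟨s, ⟨hsk, hs⟩, Q, ⟨hQ, hQgap, hj⟩, rfl⟩)
    · exact ⟨by simp, isGapSet_singleton k, mem_singleton_self k⟩
    · have hQj : ∀ q ∈ Q, q ≤ k - s - 1 := fun q hq => Nat.lt_succ_iff.1 (mem_range.1 (hQ hq))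
      refine ⟨insert_subset (by simp) (hQ.trans (range_subset_range.2 (by omega))), ?_,
        mem_insert_self k Q⟩
      rw [isGapSet_insert hQj hj (by omega)]
      exact ⟨hQgap, by rwa [show k - (k - s - 1) - 1 = s by omega]⟩

lemma card_gapSetsEndingAt (S : Set ℕ) (k : ℕ) [DecidablePred (· ∈ S)] :
    #(gapSetsEndingAt S k) =
      1 + ∑ s ∈ (range k).filter (· ∈ S), #(gapSetsEndingAt S (k - s - 1)) := by
  have hk_notMem : ∀ s < k, ∀ Q ∈ gapSetsEndingAt S (k - s - 1), k ∉ Q := by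
    intro s hs Q hQ hkQ
    have := mem_range.1 ((mem_gapSetsEndingAt.1 hQ).1 hkQ)
    omega
  rw [gapSetsEndingAt_eq, card_insert_of_notMem, card_biUnion, add_comm]
  · congr 1
    refine sum_congr rfl fun s hs => card_image_of_injOn fun Q hQ Q' hQ' hQQ' => ?_
    have hs := mem_range.1 (mem_filter.1 hs).1
    simpa [erase_insert (hk_notMem s hs Q hQ), erase_insert (hk_notMem s hs Q' hQ')] using
      congrArg (·.erase k) hQQ'
  · intro s hs s' hs' hss'
    simp only [Function.onFun, disjoint_left, mem_image]
    rintro P ⟨Q, hQ, rfl⟩ ⟨Q', hQ', hQQ'⟩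
    have hs := mem_range.1 (mem_filter.1 hs).1
    have hs' := mem_range.1 (mem_filter.1 hs').1
    have : Q' = Q := by
      simpa [erase_insert (hk_notMem s hs Q hQ), erase_insert (hk_notMem s' hs' Q' hQ')] using
        congrArg (·.erase k) hQQ'
    subst this
    have := eq_of_mem_gapSetsEndingAt hQ hQ'
    omega
  · simp only [mem_biUnion, mem_image, not_exists, not_and]
    intro s hs Q hQ hQk
    have hs := mem_range.1 (mem_filter.1 hs).1
    have hj := (mem_gapSetsEndingAt.1 hQ).2.2
    have : k - s - 1 ∈ ({k} : Finset ℕ) := hQk ▸ mem_insert_of_mem hj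
    simp at this
    omega

lemma gapSets_eq (S : Set ℕ) (n : ℕ) :
    gapSets S n = insert ∅ ((range n).biUnion (gapSetsEndingAt S)) := by
  ext P
  simp only [mem_insert, mem_biUnion, mem_range, mem_gapSetsEndingAt, mem_gapSets]
  constructor
  · rintro ⟨hPn, hP⟩
    rcases P.eq_empty_or_nonempty with rfl | hne
    · exact Or.inl rfl
    refine Or.inr ⟨P.max' hne, mem_range.1 (hPn (P.max'_mem hne)), fun q hq => ?_, hP,
      P.max'_mem hne⟩
    exact mem_range.2 (Nat.lt_succ_of_le (P.le_max' q hq))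
  · rintro (rfl | ⟨k, hk, hPk, hP, -⟩)
    · exact ⟨empty_subset _, isGapSet_empty⟩
    · exact ⟨hPk.trans (range_subset_range.2 hk), hP⟩

lemma card_gapSets (S : Set ℕ) (n : ℕ) :
    #(gapSets S n) = 1 + ∑ k ∈ range n, #(gapSetsEndingAt S k) := by
  rw [gapSets_eq, card_insert_of_notMem, card_biUnion, add_comm]
  · intro j _ k _ hjk
    exact disjoint_left.2 fun P hj hk => hjk (eq_of_mem_gapSetsEndingAt hj hk)
  · simp only [mem_biUnion, not_exists, not_and]
    exact fun k _ hk => by simpa using (mem_gapSetsEndingAt.1 hk).2.2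

lemma one_le_card_gapSetsEndingAt (k : ℕ) : 1 ≤ #(gapSetsEndingAt S k) := by
  classical
  rw [card_gapSetsEndingAt]
  omega

lemma sum_card_gapSetsEndingAt_le {T : Finset ℕ} {k : ℕ} (hT : ∀ s ∈ T, s ∈ S ∧ s < k) :
    ∑ s ∈ T, #(gapSetsEndingAt S (k - s - 1)) ≤ #(gapSetsEndingAt S k) := by
  classical
  have hsub : T ⊆ (range k).filter (· ∈ S) := fun s hs =>
    mem_filter.2 ⟨mem_range.2 (hT s hs).2, (hT s hs).1⟩
  rw [card_gapSetsEndingAt]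
  exact (sum_le_sum_of_subset hsub).trans (Nat.le_add_left _ _)

lemma card_gapSetsEndingAt_le (k : ℕ) : #(gapSetsEndingAt S k) ≤ #(gapSets S (k + 1)) := by
  rw [card_gapSets, sum_range_succ]
  omega

lemma one_le_card_gapSets (n : ℕ) : 1 ≤ #(gapSets S n) := by
  rw [card_gapSets]
  omega

def wordOfSet (n : ℕ) (P : Finset ℕ) : Fin n → Fin 2 := fun i => if (i : ℕ) ∈ P then 1 else 0

def pointOfSet (P : Finset ℕ) : ℤ → Fin 2 := fun i => if 0 ≤ i ∧ i.toNat ∈ P then 1 else 0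

lemma pointOfSet_mem_Xgap {P : Finset ℕ} (hP : IsGapSet S P) : pointOfSet P ∈ Xgap S := by
  intro i j hij hi hj hzero
  simp only [pointOfSet, ite_eq_left_iff, not_and, zero_ne_one, imp_false, not_forall,
    not_not] at hi hj
  obtain ⟨hi0, hiP⟩ := hi
  obtain ⟨hj0, hjP⟩ := hj
  rw [show (j - i - 1).toNat = j.toNat - i.toNat - 1 by omega]
  refine hP _ hiP _ hjP (by omega) fun r hr => ?_
  by_contra! hbetween
  have := hzero r (by omega) (by omega)
  simp [pointOfSet, hr] at this

lemma isGapSet_filter_eq_one {x : ℤ → Fin 2} (hx : x ∈ Xgap S) (n : ℕ) :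
    IsGapSet S ((range n).filter fun i => x i = 1) := by
  simp only [IsGapSet, mem_filter, mem_range]
  intro p ⟨hpn, hp⟩ q ⟨hqn, hq⟩ hpq hcons
  have key := hx p q (by exact_mod_cast hpq) hp hq fun k hpk hkq => by
    lift k to ℕ using by omega
    by_contra hk
    rcases hcons k ⟨by omega, Fin.eq_one_of_ne_zero _ hk⟩ with h | h <;> omega
  rwa [show ((q : ℤ) - p - 1).toNat = q - p - 1 by omega] at key

lemma langF_Xgap_eq (S : Set ℕ) (n : ℕ) :
    langF (Xgap S) n = (gapSets S n).image (wordOfSet n) := by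
  ext w
  simp only [langF, coe_image, Set.mem_image, SetLike.mem_coe, mem_gapSets]
  constructor
  · rintro ⟨x, hx, hxw⟩
    refine ⟨(range n).filter fun i => x i = 1, ⟨filter_subset _ _, isGapSet_filter_eq_one hx n⟩,
      funext fun i => ?_⟩
    rw [← hxw i]
    simp only [wordOfSet, mem_filter, mem_range, i.isLt, true_and]
    split_ifs with h
    · exact h.symm
    · by_contra h'
      exact h (Fin.eq_one_of_ne_zero _ (Ne.symm h'))
  · rintro ⟨P, ⟨-, hP⟩, rfl⟩
    exact ⟨pointOfSet P, pointOfSet_mem_Xgap hP, fun i => by simp [pointOfSet, wordOfSet]⟩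

lemma injOn_wordOfSet (n : ℕ) : Set.InjOn (wordOfSet n) {P | P ⊆ range n} := by
  intro P hP Q hQ hPQ
  ext i
  by_cases hi : i < n
  · have := congrFun hPQ ⟨i, hi⟩
    simp only [wordOfSet] at this
    split_ifs at this <;> simp_all
  · exact iff_of_false (fun h => hi (mem_range.1 (hP h))) (fun h => hi (mem_range.1 (hQ h)))

lemma ncard_langF_Xgap (S : Set ℕ) (n : ℕ) : (langF (Xgap S) n).ncard = #(gapSets S n) := by
  classical
  rw [langF_Xgap_eq, Set.ncard_coe_finset, card_image_of_injOn]
  exact (injOn_wordOfSet n).mono fun P hP => (mem_gapSets.1 hP).1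

variable {h : ℝ}

lemma entropy_nonneg (hent : Tendsto (fun n : ℕ => log (#(gapSets S n) : ℝ) / n) atTop (𝓝 h)) :
    0 ≤ h := by
  have := exp_neg_le_of_le_pow_mul hent one_pos one_pos
    (Eventually.of_forall fun n => by simpa using one_le_card_gapSets (S := S) n)
  simpa using this

lemma sum_pow_le_one (hent : Tendsto (fun n : ℕ => log (#(gapSets S n) : ℝ) / n) atTop (𝓝 h))
    (T : Finset S) : ∑ s ∈ T, exp (-h) ^ ((s : ℕ) + 1) ≤ 1 := by
  by_contra! hT
  set T' := T.map (Function.Embedding.subtype (· ∈ S))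
  have hT'S : ∀ s ∈ T', s ∈ S := by simp +contextual [T']
  obtain ⟨z, hz0, hzx, hz⟩ := exists_lt_one_lt_sum_pow (exp_pos (-h))
    (show 1 < ∑ s ∈ T', exp (-h) ^ (s + 1) by simpa [T', sum_map] using hT)
  obtain ⟨M, hM⟩ := T'.exists_nat_subset_range
  have hgrowth := pow_le_pow_succ_mul_of_sum_le (e := fun k => (#(gapSetsEndingAt S k) : ℝ))
    hz0.le (hzx.le.trans (exp_le_one_iff.2 (neg_nonpos.2 (entropy_nonneg hent)))) hz.le
    (fun s hs => mem_range.1 (hM hs)) (fun k => by exact_mod_cast one_le_card_gapSetsEndingAt k)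
    fun k hk => by
      exact_mod_cast sum_card_gapSetsEndingAt_le fun s hs =>
        ⟨hT'S s hs, (mem_range.1 (hM hs)).trans_le hk⟩
  have := exp_neg_le_of_le_pow_mul hent hz0 (pow_pos hz0 M)
    ((eventually_ge_atTop 1).mono fun n hn => by
      obtain ⟨k, rfl⟩ : ∃ k, n = k + 1 := ⟨n - 1, by omega⟩
      exact (hgrowth k).trans (mul_le_mul_of_nonneg_left
        (by exact_mod_cast card_gapSetsEndingAt_le k) (by positivity)))
  linarith

lemma one_le_tsum_pow (hent : Tendsto (fun n : ℕ => log (#(gapSets S n) : ℝ) / n) atTop (𝓝 h))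
    (hh : 0 < h) : 1 ≤ ∑' s : S, exp (-h) ^ ((s : ℕ) + 1) := by
  classical
  by_contra! hx
  obtain ⟨y, hxy, hy1, hyc⟩ :=
    exists_lt_tsum_pow_lt (exp_pos (-h)).le (exp_lt_one_iff.2 (by linarith)) hx
  have hy0 : 0 < y := (exp_pos (-h)).trans hxy
  have hsum : Summable fun s : S => y ^ ((s : ℕ) + 1) :=
    ((summable_nat_add_iff 1).2 (summable_geometric_of_lt_one hy0.le hy1)).subtype S
  have he := pow_succ_mul_le_of_le_one_add_sum (e := fun k => (#(gapSetsEndingAt S k) : ℝ))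
    (D := fun k => (range k).filter (· ∈ S)) hy0.le hy1.le hyc
    (fun k s hs => mem_range.1 (mem_filter.1 hs).1)
    (fun k => by
      rw [← sum_subtype_eq_sum_filter]
      exact hsum.sum_le_tsum _ fun _ _ => by positivity)
    fun k => by rw [card_gapSetsEndingAt]; push_cast; rfl
  have hbound := pow_mul_one_add_sum_le hy0.le hy1 (inv_nonneg.2 (by linarith)) he
  have := le_exp_neg_of_pow_mul_le hent hy0
    (Eventually.of_forall fun n => by exact_mod_cast one_le_card_gapSets n)
    (Eventually.of_forall fun n => by rw [card_gapSets]; push_cast; exact hbound n)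
  linarith

end GapShift

open GapShift

/-- Folklore formula: for `S ⊆ ℕ ∪ {0}` with `gcd(S+1) = 1` and `λ = e^{h_top(X_S)}`,
`∑_{n ∈ S} λ^{-n-1} = 1`. -/
theorem statement16 (S : Set ℕ)
    (hgcd : ∀ d : ℕ, (∀ n ∈ S, d ∣ n + 1) → d = 1)
    (h : ℝ)
    (hent : Tendsto (fun n : ℕ => Real.log ((langF (Xgap S) n).ncard : ℝ) / (n : ℝ))
      atTop (𝓝 h)) :
    ∑' n : S, (Real.exp h) ^ (-((n : ℕ) : ℤ) - 1) = 1 := by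
  have hent' : Tendsto (fun n : ℕ => log (#(gapSets S n) : ℝ) / n) atTop (𝓝 h) := by
    simpa only [ncard_langF_Xgap] using hent
  have hterm (n : S) : exp h ^ (-((n : ℕ) : ℤ) - 1) = exp (-h) ^ ((n : ℕ) + 1) := by
    rw [show -((n : ℕ) : ℤ) - 1 = -(((n : ℕ) + 1 : ℕ) : ℤ) by push_cast; ring, zpow_neg,
      zpow_natCast, ← inv_pow, exp_neg]
  rw [tsum_congr hterm]
  rcases (entropy_nonneg hent').eq_or_lt with rfl | hpos
  · obtain ⟨s₀, hs₀⟩ : S.Nonempty :=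
      Set.nonempty_iff_ne_empty.2 fun hS => by simpa [hS] using hgcd 0
    have hsub : S.Subsingleton := fun s hs t ht => by
      by_contra hst
      have := sum_pow_le_one hent' {⟨s, hs⟩, ⟨t, ht⟩}
      rw [sum_pair (by simpa using hst)] at this
      norm_num at this
    rw [hsub.eq_singleton_of_mem hs₀, tsum_singleton s₀ fun n => exp (-0) ^ (n + 1)]
    simp
  · exact le_antisymm (tsum_le_of_sum_le' zero_le_one (sum_pow_le_one hent'))
      (one_le_tsum_pow hent' hpos)
end
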